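/- Let ρ_{SE} be a density matrix on ℂ^{d_S} ⊗ ℂ^{d_E} with reduced state ρ_S = Tr_E ρ_{SE}. Then for every Hermitian matrix H on ℂ^{d_S} ⊗ ℂ^{d_E}: |Tr(H·[ρ_S ⊗ I_E, ρ_{SE}])| ≤ 2·‖H‖_∞·‖ρ_S − I_S/d_S‖_∞. -/

import Mathlib

open scoped Kronecker ComplexOrder
open Matrix MeasureTheory

noncomputable section

/-- The trace norm `‖A‖₁ = Tr √(AᴴA)`. -/
def traceNorm {n : Type*} [Fintype n] [DecidableEq n] (A : Matrix n n ℂ) : ℝ :=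
  (((Matrix.posSemidef_conjTranspose_mul_self A).1.eigenvectorUnitary.1 *
      diagonal (((↑) : ℝ → ℂ) ∘ (√·) ∘ (Matrix.posSemidef_conjTranspose_mul_self A).1.eigenvalues) *
      (star (Matrix.posSemidef_conjTranspose_mul_self A).1.eigenvectorUnitary :
        Matrix n n ℂ)).trace).re

/-- The operator (spectral) norm `‖A‖_∞`. -/
def opNorm {n : Type*} [Fintype n] [DecidableEq n] (A : Matrix n n ℂ) : ℝ :=
  ‖Matrix.toEuclideanCLM (𝕜 := ℂ) A‖

/-- The partial trace over the second tensor factor. -/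
def ptrace2 {m e : Type*} [Fintype e] (ρ : Matrix (m × e) (m × e) ℂ) : Matrix m m ℂ :=
  Matrix.of fun i j => ∑ k, ρ (i, k) (j, k)

/-- The binary logarithm `log₂` of a Hermitian matrix, via the spectral functional
calculus (junk value `0` on non-Hermitian input). -/
def matLog2 {n : Type*} [Fintype n] [DecidableEq n] (A : Matrix n n ℂ) : Matrix n n ℂ :=
  if hA : A.IsHermitian then hA.cfc (Real.logb 2) else 0

/-- The commutator `[A, B] = A·B − B·A`. -/
def mcomm {n : Type*} [Fintype n] (A B : Matrix n n ℂ) : Matrix n n ℂ :=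
  A * B - B * A

/-!
Shifting `ρ_S` by a multiple of the identity does not change the commutator, so `ρ_S ⊗ I_E` may
be replaced by `A = (ρ_S - I_S/d_S) ⊗ I_E`. Then `Tr(H[A, ρ]) = Tr(HAρ) - Tr(AHρ)`, and each term
is bounded by `|Tr(Mρ)| ≤ ‖M‖_∞ Tr ρ` for `ρ ≥ 0`: writing `ρ = B*B` gives
`Tr(Mρ) = Σᵢ ⟪bᵢ, M bᵢ⟫` with `bᵢ` the conjugated rows of `B`, and `Σᵢ ‖bᵢ‖² = Tr ρ`.
Finally `‖X ⊗ I_E‖_∞ ≤ ‖X‖_∞` because `X ↦ X ⊗ I_E` is a `*`-homomorphism of C*-algebras, and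
these are contractive.
-/

-- In this scope `opNorm A` is definitionally the norm of the C*-algebra `Matrix n n ℂ`.
open scoped MatrixOrder Matrix.Norms.L2Operator InnerProductSpace

def kroneckerOneStarAlgHom {R m e : Type*} [CommSemiring R] [StarRing R] [Fintype m]
    [DecidableEq m] [Fintype e] [DecidableEq e] :
    Matrix m m R →⋆ₐ[R] Matrix (m × e) (m × e) R where
  toFun B := B ⊗ₖ (1 : Matrix e e R)
  map_one' := one_kronecker_one
  map_mul' A B := by simp only [← mul_kronecker_mul, mul_one]
  map_zero' := zero_kronecker _
  map_add' A B := add_kronecker _ _ _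
  commutes' c := by simp [Algebra.algebraMap_eq_smul_one, smul_kronecker]
  map_star' B := by simp [star_eq_conjTranspose, conjTranspose_kronecker]

lemma opNorm_kronecker_one_le {m e : Type*} [Fintype m] [DecidableEq m] [Fintype e]
    [DecidableEq e] (B : Matrix m m ℂ) :
    opNorm (B ⊗ₖ (1 : Matrix e e ℂ)) ≤ opNorm B :=
  NonUnitalStarAlgHom.norm_apply_le (kroneckerOneStarAlgHom (e := e)) B

lemma diag_mul_mul_conjTranspose {n : Type*} [Fintype n] [DecidableEq n]
    (B M : Matrix n n ℂ) (i : n) :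
    (B * M * Bᴴ) i i = ⟪WithLp.toLp 2 (star (B i)),
      toEuclideanCLM (𝕜 := ℂ) M (WithLp.toLp 2 (star (B i)))⟫_ℂ := by
  rw [toEuclideanCLM_toLp, EuclideanSpace.inner_toLp_toLp, star_star, mul_assoc, dotProduct_comm]
  rfl

lemma norm_trace_mul_le_opNorm_mul_re_trace {n : Type*} [Fintype n] [DecidableEq n]
    (M ρ : Matrix n n ℂ) (hρ : ρ.PosSemidef) :
    ‖(M * ρ).trace‖ ≤ opNorm M * ρ.trace.re := by
  obtain ⟨B, rfl⟩ := CStarAlgebra.nonneg_iff_eq_star_mul_self.mp hρ.nonneg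
  set v : n → EuclideanSpace ℂ n := fun i => WithLp.toLp 2 (star (B i))
  have hinner (i : n) :
      ‖⟪v i, toEuclideanCLM (𝕜 := ℂ) M (v i)⟫_ℂ‖ ≤ opNorm M * ‖v i‖ ^ 2 :=
    calc _ ≤ ‖v i‖ * ‖toEuclideanCLM (𝕜 := ℂ) M (v i)‖ := norm_inner_le_norm _ _
      _ ≤ ‖v i‖ * (opNorm M * ‖v i‖) := by gcongr; exact ContinuousLinearMap.le_opNorm _ _
      _ = opNorm M * ‖v i‖ ^ 2 := by ring
  have hnorm (i : n) : ‖v i‖ ^ 2 = ((B * (1 : Matrix n n ℂ) * Bᴴ) i i).re := by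
    rw [diag_mul_mul_conjTranspose, map_one, one_apply_eq_self]
    exact (inner_self_eq_norm_sq (𝕜 := ℂ) (v i)).symm
  have hcycle (X : Matrix n n ℂ) : (X * (star B * B)).trace = (B * X * Bᴴ).trace := by
    rw [← mul_assoc, trace_mul_comm, ← mul_assoc, star_eq_conjTranspose]
  calc ‖(M * (star B * B)).trace‖
        = ‖∑ i, ⟪v i, toEuclideanCLM (𝕜 := ℂ) M (v i)⟫_ℂ‖ := by
        rw [hcycle]
        exact congrArg _ (Finset.sum_congr rfl fun i _ => diag_mul_mul_conjTranspose B M i)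
    _ ≤ ∑ i, opNorm M * ‖v i‖ ^ 2 :=
        (norm_sum_le _ _).trans (Finset.sum_le_sum fun i _ => hinner i)
    _ = opNorm M * (star B * B).trace.re := by
        rw [← Finset.mul_sum, ← one_mul (star B * B), hcycle]
        simp only [hnorm, trace, diag_apply, Complex.re_sum]

section Commutator

variable {n : Type*} [Fintype n]

lemma opNorm_mul_le [DecidableEq n] (A B : Matrix n n ℂ) :
    opNorm (A * B) ≤ opNorm A * opNorm B :=
  norm_mul_le (α := Matrix n n ℂ) A B

lemma mcomm_add_smul_one_left [DecidableEq n] (A B : Matrix n n ℂ) (c : ℂ) :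
    mcomm (A + c • 1) B = mcomm A B := by
  simp only [mcomm, add_mul, mul_add, Matrix.smul_mul, Matrix.mul_smul, one_mul, mul_one]
  abel

lemma trace_mul_mcomm (H A ρ : Matrix n n ℂ) :
    (H * mcomm A ρ).trace = (H * A * ρ).trace - (A * H * ρ).trace := by
  simp only [mcomm, mul_sub, trace_sub, ← mul_assoc]
  rw [trace_mul_cycle H ρ A]

lemma norm_trace_mul_mcomm_le [DecidableEq n] (H A ρ : Matrix n n ℂ) (hρ : ρ.PosSemidef) :
    ‖(H * mcomm A ρ).trace‖ ≤ 2 * opNorm H * opNorm A * ρ.trace.re := by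
  have hρ_re : 0 ≤ ρ.trace.re := (Complex.nonneg_iff.mp hρ.trace_nonneg).1
  rw [trace_mul_mcomm]
  calc _ ≤ ‖(H * A * ρ).trace‖ + ‖(A * H * ρ).trace‖ := norm_sub_le _ _
    _ ≤ opNorm (H * A) * ρ.trace.re + opNorm (A * H) * ρ.trace.re :=
        add_le_add (norm_trace_mul_le_opNorm_mul_re_trace _ _ hρ)
          (norm_trace_mul_le_opNorm_mul_re_trace _ _ hρ)
    _ ≤ opNorm H * opNorm A * ρ.trace.re + opNorm A * opNorm H * ρ.trace.re := by
        gcongr <;> exact opNorm_mul_le _ _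
    _ = 2 * opNorm H * opNorm A * ρ.trace.re := by ring

end Commutator

/-- For any density matrix `ρSE` and Hermitian `H`, the purity rate is
bounded by `2·‖H‖_∞·‖ρS − I_S/d_S‖_∞`. -/
theorem purity_rate_le_opNorm_diff {dS dE : ℕ}
    (ρSE : Matrix (Fin dS × Fin dE) (Fin dS × Fin dE) ℂ)
    (hρ : ρSE.PosSemidef) (htr : ρSE.trace = 1) :
    ∀ H : Matrix (Fin dS × Fin dE) (Fin dS × Fin dE) ℂ, H.IsHermitian →
      ‖(Matrix.trace (H *
          mcomm (ptrace2 ρSE ⊗ₖ (1 : Matrix (Fin dE) (Fin dE) ℂ)) ρSE))‖ ≤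
        2 * opNorm H *
          opNorm (ptrace2 ρSE - (dS : ℂ)⁻¹ • (1 : Matrix (Fin dS) (Fin dS) ℂ)) := by
  intro H _
  set B := ptrace2 ρSE - (dS : ℂ)⁻¹ • (1 : Matrix (Fin dS) (Fin dS) ℂ)
  have hshift : ptrace2 ρSE ⊗ₖ (1 : Matrix (Fin dE) (Fin dE) ℂ) =
      B ⊗ₖ (1 : Matrix (Fin dE) (Fin dE) ℂ) + (dS : ℂ)⁻¹ • 1 := by
    rw [← one_kronecker_one, ← smul_kronecker, ← add_kronecker, sub_add_cancel]
  rw [hshift, mcomm_add_smul_one_left]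
  calc _ ≤ 2 * opNorm H * opNorm (B ⊗ₖ (1 : Matrix (Fin dE) (Fin dE) ℂ)) * ρSE.trace.re :=
        norm_trace_mul_mcomm_le _ _ _ hρ
    _ ≤ 2 * opNorm H * opNorm B := by
        rw [htr, Complex.one_re, mul_one]
        have hH_nonneg : 0 ≤ opNorm H := norm_nonneg _
        gcongr
        exact opNorm_kronecker_one_le B
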